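/- Let N ≥ 1 be an integer and let f: ℤ/Nℤ → ℝ be a real function. Then the triple average (1/N³) Σ_{x,y,z ∈ ℤ/Nℤ} e^{i(f(x)+f(z−x)−f(y)−f(z−y))} is a nonnegative real number and satisfies (1/N³) Σ_{x,y,z ∈ ℤ/Nℤ} e^{i(f(x)+f(z−x)−f(y)−f(z−y))} ≥ 1/‖e^{if}‖²_{A(𝕋_N)}, where e^{if} denotes the function j ↦ e^{if(j)}. -/

import Mathlib

open scoped Real
open Complex Filter

/-- The Fourier transform on the cyclic group `ℤ/Nℤ`. -/
noncomputable def dftN (N : ℕ) [NeZero N] (g : ZMod N → ℂ) (k : ZMod N) : ℂ :=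
  (1 / (N : ℂ)) * ∑ j : ZMod N,
    g j * Complex.exp (-(2 * (π : ℂ) * Complex.I) * (j.val : ℂ) * (k.val : ℂ) / (N : ℂ))

/-- The `A(𝕋_N)` norm on the cyclic group `ℤ/Nℤ`. -/
noncomputable def normAN (N : ℕ) [NeZero N] (g : ZMod N → ℂ) : ℝ :=
  ∑ k : ZMod N, ‖dftN N g k‖

/-!
With `g = e^{if}` and `h = g ∗ g`, the triple sum is `∑_z |h(z)|²`. By Parseval and the
convolution theorem it equals `N³ ∑_k |ĝ(k)|⁴`, so the triple average is `∑_k a_k⁴` with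
`a_k = |ĝ(k)|`, while Parseval for `|g| = 1` gives `∑_k a_k² = 1`. Two Cauchy–Schwarz steps,
`(∑ a²)² ≤ (∑ a)(∑ a³)` and `(∑ a³)² ≤ (∑ a²)(∑ a⁴)`, give `(∑ a²)³ ≤ (∑ a)² ∑ a⁴`, i.e.
`1 ≤ ‖g‖²_A ∑ a⁴`.
-/

open Finset ZMod ComplexConjugate

theorem Finset.sum_sq_pow_three_le_sq_sum_mul_sum_pow_four {ι R : Type*} [CommSemiring R]
    [LinearOrder R] [IsStrictOrderedRing R] [ExistsAddOfLE R] (s : Finset ι) {a : ι → R}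
    (ha : ∀ i ∈ s, 0 ≤ a i) :
    (∑ i ∈ s, a i ^ 2) ^ 3 ≤ (∑ i ∈ s, a i) ^ 2 * ∑ i ∈ s, a i ^ 4 := by
  set A₁ := ∑ i ∈ s, a i
  set A₂ := ∑ i ∈ s, a i ^ 2
  set A₃ := ∑ i ∈ s, a i ^ 3
  set A₄ := ∑ i ∈ s, a i ^ 4
  have h₁₃ : A₂ ^ 2 ≤ A₁ * A₃ :=
    sum_sq_le_sum_mul_sum_of_sq_le_mul s ha (fun i hi ↦ pow_nonneg (ha i hi) 3)
      fun i _ ↦ le_of_eq (by ring)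
  have h₂₄ : A₃ ^ 2 ≤ A₂ * A₄ :=
    sum_sq_le_sum_mul_sum_of_sq_le_mul s (fun i hi ↦ pow_nonneg (ha i hi) 2)
      (fun i hi ↦ pow_nonneg (ha i hi) 4) fun i _ ↦ le_of_eq (by ring)
  rcases (sum_nonneg fun i hi ↦ pow_nonneg (ha i hi) 2 : 0 ≤ A₂).eq_or_lt with h₀ | hpos
  · rw [show A₂ = 0 from h₀.symm, zero_pow three_ne_zero]
    exact mul_nonneg (sq_nonneg _) (sum_nonneg fun i hi ↦ pow_nonneg (ha i hi) 4)
  refine le_of_mul_le_mul_left ?_ hpos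
  calc A₂ * A₂ ^ 3 = (A₂ ^ 2) ^ 2 := by ring
    _ ≤ (A₁ * A₃) ^ 2 := pow_le_pow_left₀ (sq_nonneg _) h₁₃ 2
    _ = A₁ ^ 2 * A₃ ^ 2 := mul_pow _ _ _
    _ ≤ A₁ ^ 2 * (A₂ * A₄) := mul_le_mul_of_nonneg_left h₂₄ (sq_nonneg _)
    _ = A₂ * (A₁ ^ 2 * A₄) := by ring

namespace ZMod

variable {N : ℕ} [NeZero N]

lemma conj_stdAddChar (a : ZMod N) : conj (stdAddChar a) = stdAddChar (-a) := by
  rw [stdAddChar_apply, stdAddChar_apply, AddChar.map_neg_eq_inv, Circle.coe_inv_eq_conj]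

theorem dft_conv (Φ Ψ : ZMod N → ℂ) (k : ZMod N) :
    𝓕 (fun z ↦ ∑ x, Φ x * Ψ (z - x)) k = 𝓕 Φ k * 𝓕 Ψ k := by
  simp only [dft_apply, smul_eq_mul, sum_mul_sum]
  simp only [mul_sum]
  rw [sum_comm]
  refine sum_congr rfl fun x _ ↦ Fintype.sum_equiv (Equiv.subRight x) _ _ fun z ↦ ?_
  have : stdAddChar (-(z * k)) = stdAddChar (-(x * k)) * stdAddChar (-((z - x) * k)) := by
    rw [← AddChar.map_add_eq_mul]; ring_nf
  rw [Equiv.subRight_apply, this]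
  ring

theorem sum_norm_sq_dft (Φ : ZMod N → ℂ) : ∑ k, ‖𝓕 Φ k‖ ^ 2 = N * ∑ j, ‖Φ j‖ ^ 2 := by
  have inversion (j : ZMod N) : ∑ k, stdAddChar (k * j) * 𝓕 Φ k = N * Φ j := by
    have := congrFun (dft.symm_apply_apply Φ) j
    simp only [invDFT_apply, smul_eq_mul] at this
    rwa [inv_mul_eq_iff_eq_mul₀ (NeZero.ne _)] at this
  apply Complex.ofReal_injective
  push_cast
  calc ∑ k, ((‖𝓕 Φ k‖ : ℂ) ^ 2) = ∑ k, conj (𝓕 Φ k) * 𝓕 Φ k := by simp only [conj_mul']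
    _ = ∑ k, conj (𝓕 Φ k) * ∑ j, stdAddChar (-(j * k)) * Φ j := rfl
    _ = ∑ j, Φ j * conj (∑ k, stdAddChar (k * j) * 𝓕 Φ k) := by
      simp only [map_sum, map_mul, conj_stdAddChar, mul_sum]
      rw [sum_comm]
      exact sum_congr rfl fun j _ ↦ sum_congr rfl fun k _ ↦ by rw [mul_comm k j]; ring
    _ = N * ∑ j, (‖Φ j‖ : ℂ) ^ 2 := by
      simp only [inversion, map_mul, map_natCast, mul_sum, ← mul_conj']
      exact sum_congr rfl fun _ _ ↦ by ring

end ZMod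

lemma sum_sum_sum_mul_conj {α β : Type*} [Fintype α] [Fintype β] (F : α → β → ℂ) :
    ∑ x, ∑ y, ∑ z, F x z * conj (F y z) = ∑ z, ((‖∑ x, F x z‖ ^ 2 : ℝ) : ℂ) := by
  simp only [ofReal_pow, ← mul_conj', map_sum, sum_mul_sum]
  exact (sum_congr rfl fun _ _ ↦ sum_comm).trans sum_comm

lemma exp_I_mul_add_sub_sub (a b c d : ℝ) :
    exp (I * ((a + b - c - d : ℝ) : ℂ)) =
      exp (I * a) * exp (I * b) * conj (exp (I * c) * exp (I * d)) := by
  simp only [← exp_conj, ← exp_add, map_add, map_mul, conj_I, conj_ofReal]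
  push_cast
  ring_nf

section Normalized

variable {N : ℕ} [NeZero N]

lemma dftN_eq_inv_mul_dft (g : ZMod N → ℂ) (k : ZMod N) : dftN N g k = (N : ℂ)⁻¹ * 𝓕 g k := by
  rw [dftN, one_div, dft_apply]
  refine congrArg _ (sum_congr rfl fun j _ ↦ ?_)
  have : -(j * k) = (Int.cast (-(j.val * k.val : ℤ)) : ZMod N) := by
    push_cast; simp only [natCast_zmod_val]
  rw [this, stdAddChar_coe, smul_eq_mul, mul_comm]
  push_cast
  ring_nf

lemma norm_dftN (g : ZMod N → ℂ) (k : ZMod N) : ‖dftN N g k‖ = ‖𝓕 g k‖ / N := by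
  rw [dftN_eq_inv_mul_dft, norm_mul, norm_inv, norm_natCast, inv_mul_eq_div]

lemma sum_norm_sq_dftN (g : ZMod N → ℂ) : ∑ k, ‖dftN N g k‖ ^ 2 = (∑ j, ‖g j‖ ^ 2) / N := by
  have hN : (N : ℝ) ≠ 0 := NeZero.ne _
  simp only [norm_dftN, div_pow, ← sum_div, sum_norm_sq_dft]
  field_simp

lemma dftN_conv (Φ Ψ : ZMod N → ℂ) (k : ZMod N) :
    dftN N (fun z ↦ ∑ x, Φ x * Ψ (z - x)) k = N * (dftN N Φ k * dftN N Ψ k) := by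
  have hN : (N : ℂ) ≠ 0 := NeZero.ne _
  simp only [dftN_eq_inv_mul_dft, dft_conv]
  field_simp

lemma triple_average_eq_sum_norm_dftN_pow_four (f : ZMod N → ℝ) :
    (1 : ℂ) / (N : ℂ) ^ 3 * ∑ x : ZMod N, ∑ y : ZMod N, ∑ z : ZMod N,
        exp (I * ((f x + f (z - x) - f y - f (z - y) : ℝ) : ℂ)) =
      ((∑ k, ‖dftN N (fun j ↦ exp (I * f j)) k‖ ^ 4 : ℝ) : ℂ) := by
  simp only [exp_I_mul_add_sub_sub]
  set g : ZMod N → ℂ := fun j ↦ exp (I * f j)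
  have hN : (N : ℝ) ≠ 0 := NeZero.ne _
  have parseval := sum_norm_sq_dftN fun z ↦ ∑ x, g x * g (z - x)
  simp only [dftN_conv, norm_mul, norm_natCast, mul_pow, ← pow_add, ← mul_sum] at parseval
  rw [eq_div_iff hN] at parseval
  rw [sum_sum_sum_mul_conj fun x z ↦ g x * g (z - x), ← ofReal_sum, ← parseval]
  push_cast
  field_simp [NeZero.ne (N : ℂ)]

lemma sum_norm_sq_dftN_exp (f : ZMod N → ℝ) :
    ∑ k, ‖dftN N (fun j ↦ exp (I * f j)) k‖ ^ 2 = 1 := by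
  have hN : (N : ℝ) ≠ 0 := NeZero.ne _
  simp [sum_norm_sq_dftN, norm_exp_I_mul_ofReal, hN]

end Normalized

theorem triple_average_lower_bound
    (N : ℕ) [NeZero N] (f : ZMod N → ℝ) :
    (((1 : ℂ) / (N : ℂ) ^ 3) * ∑ x : ZMod N, ∑ y : ZMod N, ∑ z : ZMod N,
        Complex.exp (Complex.I * ((f x + f (z - x) - f y - f (z - y) : ℝ) : ℂ))).im = 0 ∧
    0 ≤ (((1 : ℂ) / (N : ℂ) ^ 3) * ∑ x : ZMod N, ∑ y : ZMod N, ∑ z : ZMod N,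
        Complex.exp (Complex.I * ((f x + f (z - x) - f y - f (z - y) : ℝ) : ℂ))).re ∧
    1 / (normAN N fun j : ZMod N => Complex.exp (Complex.I * (f j : ℂ))) ^ 2 ≤
      (((1 : ℂ) / (N : ℂ) ^ 3) * ∑ x : ZMod N, ∑ y : ZMod N, ∑ z : ZMod N,
        Complex.exp (Complex.I * ((f x + f (z - x) - f y - f (z - y) : ℝ) : ℂ))).re := by
  rw [triple_average_eq_sum_norm_dftN_pow_four, ofReal_im, ofReal_re]
  have holder := sum_sq_pow_three_le_sq_sum_mul_sum_pow_four univ fun k _ ↦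
    norm_nonneg (dftN N (fun j ↦ exp (I * f j)) k)
  rw [sum_norm_sq_dftN_exp, one_pow, mul_comm] at holder
  exact ⟨rfl, by positivity, div_le_of_le_mul₀ (sq_nonneg _) (by positivity) holder⟩
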